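/- In the free associative algebra on variables a_{ij} (1 ≤ i,j ≤ m), interpret a word a_{i i₁}a_{i₁i₂}⋯a_{i_{ℓ-1}j} as a lattice path from height i to height j. Fix n < m and i,j > n. Then every path from i to j factors uniquely as a concatenation P₁P₂⋯P_p of nontrivial paths, where each P_r has starting and ending heights > n, consecutive P_r's match at their endpoints, and all intermediate heights of each P_r are ≤ n. Consequently, with c_{i'j'} defined as the formal power series a_{i'j'} + a_{i'*}(I-A₀)^{-1}a_{*j'} (the sum over all nontrivial paths from i' to j' with intermediate heights ≤ n), one has ((I-A)^{-1})_{ij} = ((I-C)^{-1})_{ij} as formal power series. -/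

import Mathlib

/-!
Cutting a path just before each step that starts at a high height gives the factorization;
`List.splitBy` does exactly this, and its characterization `List.splitBy_eq_iff` gives
uniqueness. A piece also ends high because the next piece starts where it ends.

The identity is a Schur complement computation. Ordering heights as low then high,
`I - A = [[I - A₀, -B], [-B', I - D]]`. If `X (I - A) = I` and `(I - A₀) Y = I`, the
low–high block row of `X (I - A) = I` gives `X₂₁ = -X₂₂ B' Y`, and then the high–high one
reads `X₂₂ (I - D - B' Y B) = I`, i.e. `X₂₂ (I - C) = I`; so `X₂₂ = Z`.
-/

namespace List

variable {α : Type*}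

theorem isChain_const_left_iff {q : α → Prop} :
    ∀ {l : List α}, l.IsChain (fun _ y => q y) ↔ ∀ y ∈ l.tail, q y
  | [] => by simp
  | [_] => by simp
  | a :: b :: l => by
    rw [isChain_cons_cons, isChain_const_left_iff]
    simp

theorem splitBy_eq_iff_of_head? {q : α → Prop} [DecidablePred q] {l : List α}
    (hl : ∀ x ∈ l.head?, q x) {L : List (List α)} :
    l.splitBy (fun _ y => !decide (q y)) = L ↔
      l = L.flatten ∧ ∀ P ∈ L, P ≠ [] ∧ (∀ x ∈ P.head?, q x) ∧ ∀ x ∈ P.tail, ¬ q x := by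
  simp only [splitBy_eq_iff, Bool.not_eq_true', decide_eq_false_iff_not, Bool.not_eq_false',
    decide_eq_true_eq, isChain_const_left_iff]
  constructor
  · rintro ⟨rfl, hnil, htail, hheads⟩
    have hnext : ∀ P ∈ L.tail, ∀ x ∈ P.head?, q x := isChain_const_left_iff.mp <|
      hheads.imp fun _ b ⟨_, hb, hq⟩ x hx => head_of_mem_head? hx ▸ hq
    refine ⟨rfl, fun P hP => ⟨ne_of_mem_of_not_mem hP hnil, ?_, htail P hP⟩⟩
    obtain _ | ⟨Q, L⟩ := L
    · simp at hP
    rcases mem_cons.mp hP with rfl | hP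
    · intro x hx
      exact hl x (by simpa [head?_append] using Or.inl hx)
    · exact hnext P hP
  · rintro ⟨rfl, hL⟩
    refine ⟨rfl, fun h => (hL [] h).1 rfl, fun P hP => (hL P hP).2.2, ?_⟩
    rw [isChain_iff_forall_rel_of_append_cons_cons]
    rintro a b l₁ l₂ rfl
    obtain ⟨hb, hbq, -⟩ := hL b (by simp)
    exact ⟨(hL a (by simp)).1, hb, hbq _ (head_mem_head? hb)⟩

theorem forall_getLast?_of_isChain_flatten {R : α → α → Prop} {qh ql : α → Prop}
    (hR : ∀ s t, R s t → qh t → ql s) :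
    ∀ {L : List (List α)}, [] ∉ L → (∀ P ∈ L, ∀ x ∈ P.head?, qh x) →
      L.flatten.IsChain R → (∀ x ∈ L.flatten.getLast?, ql x) → ∀ P ∈ L, ∀ x ∈ P.getLast?, ql x
  | [], _, _, _, _ => by simp
  | [P], _, _, _, hlast => by simpa using hlast
  | P :: Q :: L, hne, hhead, hchain, hlast => by
    have hQ : Q ≠ [] := fun h => hne (h ▸ by simp)
    obtain ⟨y, hy⟩ : ∃ y, Q.head? = some y := Option.isSome_iff_exists.mp (by simpa using hQ)
    rw [flatten_cons, isChain_append] at hchain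
    rintro P' (_ | ⟨_, hP'⟩) x hx
    · exact hR x y (hchain.2.2 x hx y (by simp [hy])) (hhead Q (by simp) y hy)
    · refine forall_getLast?_of_isChain_flatten hR (fun h => hne (mem_cons_of_mem _ h))
        (fun P hP => hhead P (mem_cons_of_mem _ hP)) hchain.2.1 ?_ P' hP' x hx
      rwa [flatten_cons, getLast?_append_of_ne_nil _ (by simp [hQ])] at hlast

theorem existsUnique_excursion_factorization {β : Type*} (q : β → Prop) [DecidablePred q]
    {ps : List (β × β)} (hchain : ps.IsChain (fun s t => s.2 = t.1))
    (hhead : ∀ x ∈ ps.head?, q x.1) (hlast : ∀ x ∈ ps.getLast?, q x.2) :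
    ∃! L : List (List (β × β)), L.flatten = ps ∧ ∀ P ∈ L, P ≠ [] ∧ (∀ x ∈ P.head?, q x.1) ∧
      (∀ x ∈ P.getLast?, q x.2) ∧ ∀ s ∈ P.tail, ¬ q s.1 := by
  refine ⟨ps.splitBy (fun _ t => !decide (q t.1)), ?_, fun L ⟨hflat, hL⟩ => ?_⟩
  · obtain ⟨hflat, hL⟩ := (splitBy_eq_iff_of_head? (q := fun s : β × β => q s.1) hhead).mp rfl
    have hlasts := forall_getLast?_of_isChain_flatten (qh := fun s : β × β => q s.1)
      (ql := fun s : β × β => q s.2)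
      (fun s t (h : s.2 = t.1) ht => h ▸ ht) (fun h => (hL [] h).1 rfl)
      (fun P hP => (hL P hP).2.1) (hflat ▸ hchain) (hflat ▸ hlast)
    exact ⟨hflat.symm, fun P hP => ⟨(hL P hP).1, (hL P hP).2.1, hlasts P hP, (hL P hP).2.2⟩⟩
  · exact ((splitBy_eq_iff_of_head? (q := fun s : β × β => q s.1) hhead).mpr
      ⟨hflat.symm, fun P hP => ⟨(hL P hP).1, (hL P hP).2.1, (hL P hP).2.2.2⟩⟩).symm

end List

namespace Matrix

variable {R l k ι : Type*} [Ring R] [Fintype l] [Fintype k] [DecidableEq l] [DecidableEq k]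

theorem toBlocks₂₂_mul_schur_eq_one {X : Matrix (l ⊕ k) (l ⊕ k) R} {a : Matrix l l R}
    {b : Matrix l k R} {c : Matrix k l R} {d : Matrix k k R} {Y : Matrix l l R}
    (hX : X * fromBlocks a b c d = 1) (hY : a * Y = 1) :
    X.toBlocks₂₂ * (d - c * Y * b) = 1 := by
  rw [← fromBlocks_toBlocks X, fromBlocks_multiply, ← fromBlocks_one] at hX
  have h₂₁ := congrArg toBlocks₂₁ hX
  have h₂₂ := congrArg toBlocks₂₂ hX
  simp only [toBlocks_fromBlocks₂₁, toBlocks_fromBlocks₂₂] at h₂₁ h₂₂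
  have hX₂₁ : X.toBlocks₂₁ = -(X.toBlocks₂₂ * c * Y) := by
    calc X.toBlocks₂₁ = X.toBlocks₂₁ * a * Y := by rw [Matrix.mul_assoc, hY, Matrix.mul_one]
      _ = -(X.toBlocks₂₂ * c * Y) := by rw [eq_neg_of_add_eq_zero_left h₂₁, Matrix.neg_mul]
  calc X.toBlocks₂₂ * (d - c * Y * b) = X.toBlocks₂₂ * d + -(X.toBlocks₂₂ * c * Y) * b := by
        simp only [sub_eq_add_neg, Matrix.mul_add, Matrix.mul_neg, Matrix.neg_mul, Matrix.mul_assoc]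
    _ = 1 := by rw [← hX₂₁, add_comm, h₂₂]

theorem submatrix_inr_mul_one_sub_schur_eq_one [Fintype ι] [DecidableEq ι] (σ : l ⊕ k ≃ ι)
    {A X : Matrix ι ι R} {Y : Matrix l l R} (hX : X * (1 - A) = 1)
    (hY : (1 - A.submatrix (σ ∘ Sum.inl) (σ ∘ Sum.inl)) * Y = 1) :
    X.submatrix (σ ∘ Sum.inr) (σ ∘ Sum.inr) *
      (1 - (A.submatrix (σ ∘ Sum.inr) (σ ∘ Sum.inr) + A.submatrix (σ ∘ Sum.inr) (σ ∘ Sum.inl) * Y *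
        A.submatrix (σ ∘ Sum.inl) (σ ∘ Sum.inr))) = 1 := by
  have hblocks : (1 - A).submatrix σ σ = fromBlocks (1 - A.submatrix (σ ∘ Sum.inl) (σ ∘ Sum.inl))
      (-A.submatrix (σ ∘ Sum.inl) (σ ∘ Sum.inr)) (-A.submatrix (σ ∘ Sum.inr) (σ ∘ Sum.inl))
      (1 - A.submatrix (σ ∘ Sum.inr) (σ ∘ Sum.inr)) := by
    ext (i | i) (j | j) <;> simp [one_apply]
  have hXσ : X.submatrix σ σ * (1 - A).submatrix σ σ = 1 := by
    rw [submatrix_mul_equiv, hX, submatrix_one_equiv]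
  rw [hblocks] at hXσ
  convert toBlocks₂₂_mul_schur_eq_one hXσ hY using 2
  · rfl
  · simp only [Matrix.neg_mul, Matrix.mul_neg, neg_neg, sub_sub]

end Matrix

/-- Gelfand–Retakh non-commutative Sylvester identity via path decomposition.
A lattice step is a pair `(i, j) : Fin m × Fin m` (starting and ending heights,
0-indexed, so "height ≤ n" reads `< n` and "height > n" reads `n ≤ ·`).
First conclusion: every lattice path from a height `≥ n` to a height `≥ n`
factors uniquely into nontrivial paths whose starting and ending heights are `≥ n`
and all of whose intermediate heights are `< n`.
Second conclusion: with `c_{i'j'} = a_{i'j'} + a_{i'*}(I - A₀)⁻¹ a_{*j'}` (the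
inverses being hypothesized two-sided inverses, as holds for the formal power
series `I + A + A² + ⋯`), one has `((I-A)⁻¹)_{ij} = ((I-C)⁻¹)_{ij}` for all
high indices `i, j`. -/
theorem gelfand_retakh_sylvester {R : Type*} [Ring R] (m n : ℕ) (hn : n < m)
    (A : Matrix (Fin m) (Fin m) R)
    (Y : Matrix (Fin n) (Fin n) R)
    (hY1 : (1 - A.submatrix (Fin.castLE hn.le) (Fin.castLE hn.le)) * Y = 1)
    (X : Matrix (Fin m) (Fin m) R)
    (hX2 : X * (1 - A) = 1) :
    let e : Fin (m - n) → Fin m := fun k => ⟨n + (k : ℕ), by have := k.isLt; omega⟩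
    let C : Matrix (Fin (m - n)) (Fin (m - n)) R :=
      Matrix.of fun k l => A (e k) (e l) +
        ∑ r : Fin n, ∑ s : Fin n,
          A (e k) (Fin.castLE hn.le r) * Y r s * A (Fin.castLE hn.le s) (e l)
    ∀ Z : Matrix (Fin (m - n)) (Fin (m - n)) R,
      (1 - C) * Z = 1 → Z * (1 - C) = 1 →
      -- unique factorization of paths between high heights
      (∀ ps : List (Fin m × Fin m), ps ≠ [] →
        ps.Chain' (fun s t => s.2 = t.1) →
        (∀ x ∈ ps.head?, n ≤ (x.1 : ℕ)) →
        (∀ x ∈ ps.getLast?, n ≤ (x.2 : ℕ)) →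
        ∃! parts : List (List (Fin m × Fin m)),
          parts.flatten = ps ∧
          ∀ P ∈ parts, P ≠ [] ∧
            (∀ x ∈ P.head?, n ≤ (x.1 : ℕ)) ∧
            (∀ x ∈ P.getLast?, n ≤ (x.2 : ℕ)) ∧
            (∀ s ∈ P.tail, (s.1 : ℕ) < n)) ∧
      -- the resulting identity of inverse-matrix entries
      (∀ i j : Fin (m - n), X (e i) (e j) = Z i j) := by
  intro e C Z hZ1 _
  refine ⟨fun ps _ hchain hhead hlast => ?_, ?_⟩
  · simpa only [not_le] using
      List.existsUnique_excursion_factorization (fun h : Fin m => n ≤ (h : ℕ)) hchain hhead hlast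
  let σ : Fin n ⊕ Fin (m - n) ≃ Fin m := finSumFinEquiv.trans (finCongr (by omega))
  have hσl : σ ∘ Sum.inl = Fin.castLE hn.le := by funext r; ext; simp [σ]
  have hσr : σ ∘ Sum.inr = e := by funext k; ext; simp [σ, e]
  have hC : C = A.submatrix e e +
      A.submatrix e (Fin.castLE hn.le) * Y * A.submatrix (Fin.castLE hn.le) e := by
    ext k l
    simp only [C, Matrix.of_apply, Matrix.add_apply, Matrix.submatrix_apply, Matrix.mul_apply,
      Finset.sum_mul, add_right_inj]
    exact Finset.sum_comm
  have hXZ : X.submatrix e e = Z := by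
    refine left_inv_eq_right_inv ?_ hZ1
    have := Matrix.submatrix_inr_mul_one_sub_schur_eq_one σ hX2 (hσl ▸ hY1)
    rwa [hσl, hσr, ← hC] at this
  intro i j
  rw [← hXZ]
  rfl
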